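/- Let H be a 2-connected graph on n ≥ 6 vertices that is not a subgraph of S_{n,2} = K_2 ∨ complement(K_{n-2}), and let G be obtained from H by attaching a pendant path with 2 additional vertices at a vertex u₁ of H (identify u₁ with an endpoint of P_3). Then G contains P_5 ∪ P_3 as a subgraph. -/

import Mathlib

open SimpleGraph

/-- `G` embeds into `H` as a (not necessarily induced) subgraph. -/
def SubgraphOf {V W : Type*} (G : SimpleGraph V) (H : SimpleGraph W) : Prop :=
  ∃ f : V ↪ W, ∀ a b, G.Adj a b → H.Adj (f a) (f b)

/-- `G` contains a linear forest consisting of pairwise vertex-disjoint paths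
with orders `L i` (`i : ι`). -/
def ContainsForest {V ι : Type*} (G : SimpleGraph V) (L : ι → ℕ) : Prop :=
  ∃ f : ∀ i, Fin (L i) → V,
    (∀ i, Function.Injective (f i)) ∧
    (∀ i j, i ≠ j → ∀ a b, f i a ≠ f j b) ∧
    (∀ i (a : ℕ) (ha : a + 1 < L i), G.Adj (f i ⟨a, by omega⟩) (f i ⟨a + 1, ha⟩))

/-- `G` is 2-connected: more than 2 vertices and removing fewer than 2 vertices
leaves a connected graph. -/
def TwoConnected {V : Type*} [Fintype V] (G : SimpleGraph V) : Prop :=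
  2 < Fintype.card V ∧
    ∀ s : Finset V, s.card < 2 → (G.induce ((s : Set V)ᶜ)).Connected

/-- `S_{n,h} = K_h ∨ \overline{K_{n-h}}`. -/
def Sgraph (n h : ℕ) : SimpleGraph (Fin n) :=
  SimpleGraph.fromRel (fun a _ => a.val < h)

/-- `S⁺_{n,h} = K_h ∨ (K_2 ∪ \overline{K_{n-h-2}})`, the extra edge joining vertices `h` and `h+1`. -/
def SplusGraph (n h : ℕ) : SimpleGraph (Fin n) :=
  SimpleGraph.fromRel (fun a b => a.val < h ∨ (a.val ≤ h + 1 ∧ b.val ≤ h + 1))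

/-- index of the clique block containing vertex `v ≥ 1` in `K_1 ∨ (t₁ K_h ∪ t₂ K_{h+1})`. -/
def blockIdx (t₁ h v : ℕ) : ℕ :=
  if v - 1 < t₁ * h then (v - 1) / h else t₁ + (v - 1 - t₁ * h) / (h + 1)

/-- `L_{t₁,t₂,h,h+1} = K_1 ∨ (t₁ K_h ∪ t₂ K_{h+1})`; vertex `0` is the center. -/
def Lgen (t₁ t₂ h : ℕ) : SimpleGraph (Fin (t₁ * h + t₂ * (h + 1) + 1)) :=
  SimpleGraph.fromRel (fun a b =>
    a.val = 0 ∨ blockIdx t₁ h a.val = blockIdx t₁ h b.val)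

/-- `U_{3,h}`: three copies of `K_{h+1}` plus a triangle on one chosen vertex of each. -/
def Ugraph (h : ℕ) : SimpleGraph (Fin (3 * (h + 1))) :=
  SimpleGraph.fromRel (fun a b =>
    a.val / (h + 1) = b.val / (h + 1) ∨ (a.val % (h + 1) = 0 ∧ b.val % (h + 1) = 0))

/-- `K_p ∨ (m K_2)`: a clique on the first `p` vertices joined to `m` disjoint edges. -/
def KjoinMK2 (p m : ℕ) : SimpleGraph (Fin (p + 2 * m)) :=
  SimpleGraph.fromRel (fun a b => a.val < p ∨ (a.val - p) / 2 = (b.val - p) / 2)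

/-- `F_{t₁,t₂,h,h+1}`: `L_{t₁,t₂,h,h+1}` plus one extra `K_{h+1}` joined to the center by an edge. -/
def Fgraph (t₁ t₂ h : ℕ) : SimpleGraph (Fin (t₁ * h + (t₂ + 1) * (h + 1) + 1)) :=
  SimpleGraph.fromRel (fun a b =>
    (a.val < t₁ * h + t₂ * (h + 1) + 1 ∧ b.val < t₁ * h + t₂ * (h + 1) + 1 ∧
      (a.val = 0 ∨ blockIdx t₁ h a.val = blockIdx t₁ h b.val)) ∨
    (t₁ * h + t₂ * (h + 1) + 1 ≤ a.val ∧ t₁ * h + t₂ * (h + 1) + 1 ≤ b.val) ∨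
    (a.val = 0 ∧ b.val = t₁ * h + t₂ * (h + 1) + 1))

/-- `T_{t₁,t₂,h,h+1}`: `L_{t₁,t₂,h,h+1}` plus two extra `K_{h+1}`'s, each joined to the center by an edge. -/
def Tgraph (t₁ t₂ h : ℕ) : SimpleGraph (Fin (t₁ * h + (t₂ + 2) * (h + 1) + 1)) :=
  SimpleGraph.fromRel (fun a b =>
    (a.val < t₁ * h + t₂ * (h + 1) + 1 ∧ b.val < t₁ * h + t₂ * (h + 1) + 1 ∧
      (a.val = 0 ∨ blockIdx t₁ h a.val = blockIdx t₁ h b.val)) ∨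
    (t₁ * h + t₂ * (h + 1) + 1 ≤ a.val ∧ a.val < t₁ * h + (t₂ + 1) * (h + 1) + 1 ∧
      t₁ * h + t₂ * (h + 1) + 1 ≤ b.val ∧ b.val < t₁ * h + (t₂ + 1) * (h + 1) + 1) ∨
    (t₁ * h + (t₂ + 1) * (h + 1) + 1 ≤ a.val ∧ t₁ * h + (t₂ + 1) * (h + 1) + 1 ≤ b.val) ∨
    (a.val = 0 ∧ b.val = t₁ * h + t₂ * (h + 1) + 1) ∨
    (a.val = 0 ∧ b.val = t₁ * h + (t₂ + 1) * (h + 1) + 1))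

/-- attach a pendant path with `m` additional vertices at the vertex `u` of `H`
(i.e. identify `u` with an endpoint of `P_{m+1}`). -/
def attachPath {V : Type*} (H : SimpleGraph V) (u : V) (m : ℕ) : SimpleGraph (V ⊕ Fin m) :=
  SimpleGraph.fromRel (fun a b =>
    (∃ x y, a = Sum.inl x ∧ b = Sum.inl y ∧ H.Adj x y) ∨
    (∃ j : Fin m, a = Sum.inl u ∧ b = Sum.inr j ∧ j.val = 0) ∨
    (∃ i j : Fin m, a = Sum.inr i ∧ b = Sum.inr j ∧ j.val = i.val + 1))


/-!
Let `H' = H - u₁`, which is connected. If `H'` contains a path on five vertices, it is the `P₅`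
and the pendant path `u₁ p₁ p₂` is the `P₃`. Otherwise `H'` still contains a path `v₁ v₂ v₃ v₄`,
because `H` has no vertex cover of size two and so `H'` is not a star. Every other vertex `z` of
`H'` is then adjacent to `v₂` or `v₃` (else `H'` would contain a `P₅`). If `v₁ v₃` is an edge, `z`
is adjacent to `v₃`, and as `H - v₃` is connected, `u₁` is adjacent to `v₁` or `v₂`: this gives
`v₂ v₁ u₁ p₁ p₂` (or `v₁ v₂ u₁ p₁ p₂`) and `v₄ v₃ z`. Without chords, say `z ~ v₂`, the only
neighbour of `v₄` in `H'` is `v₃`, so `u₁ ~ v₄` as `H` has minimum degree two: this gives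
`v₃ v₄ u₁ p₁ p₂` and `v₁ v₂ z`. A chord `v₂ v₄` or a neighbour `z ~ v₃` is the mirror image.
-/

theorem List.exists_notMem_of_length_lt_card {V : Type*} [Fintype V] (l : List V)
    (h : l.length < Fintype.card V) : ∃ z, z ∉ l :=
  Cardinal.exists_notMem_of_length_lt l (by rw [Cardinal.mk_fintype]; exact_mod_cast h)

theorem containsForest_of_lists {V ι : Type*} (G : SimpleGraph V) (l : ι → List V)
    (hnodup : ∀ i, (l i).Nodup) (hdisj : Pairwise fun i j => (l i).Disjoint (l j))
    (hchain : ∀ i, (l i).IsChain G.Adj) : ContainsForest G fun i => (l i).length :=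
  ⟨fun i k => (l i).get k, fun i => List.nodup_iff_injective_get.mp (hnodup i),
    fun i j hij a b h => hdisj hij (List.get_mem (l i) a)
      ((show (l i).get a = (l j).get b from h) ▸ List.get_mem (l j) b),
    fun i => List.isChain_iff_getElem.mp (hchain i)⟩

theorem containsForest_pair {V : Type*} (G : SimpleGraph V) (l₁ l₂ : List V)
    (hnodup : (l₁ ++ l₂).Nodup) (h₁ : l₁.IsChain G.Adj) (h₂ : l₂.IsChain G.Adj) :
    ContainsForest G ![l₁.length, l₂.length] := by
  rw [List.nodup_append'] at hnodup
  convert containsForest_of_lists G ![l₁, l₂] (Fin.forall_fin_two.mpr ⟨hnodup.1, hnodup.2.1⟩)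
    ?_ (Fin.forall_fin_two.mpr ⟨h₁, h₂⟩) using 1
  · ext i; fin_cases i <;> rfl
  · intro i j hij
    fin_cases i <;> fin_cases j
    exacts [absurd rfl hij, hnodup.2.2, hnodup.2.2.symm, absurd rfl hij]

section attachPath

variable {V : Type*} {H : SimpleGraph V} {u : V} {m : ℕ}

theorem attachPath_adj_inl {x y : V} : (attachPath H u m).Adj (.inl x) (.inl y) ↔ H.Adj x y := by
  simp only [attachPath, fromRel_adj]
  grind [SimpleGraph.Adj.ne, SimpleGraph.Adj.symm]

theorem attachPath_adj_inl_inr_zero : (attachPath H u (m + 1)).Adj (.inl u) (.inr 0) := by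
  simp [attachPath]

theorem attachPath_adj_inr_succ (i : Fin m) (j : Fin m) (h : j.val = i.val + 1) :
    (attachPath H u m).Adj (.inr i) (.inr j) := by
  simp only [attachPath, fromRel_adj]
  exact ⟨by simp [Fin.ext_iff, h], .inl (.inr (.inr ⟨i, j, rfl, rfl, h⟩))⟩

end attachPath

section paths

variable {V : Type*} (H : SimpleGraph V) (u : V)

def HasP5Avoiding : Prop :=
  ∃ a b c d e : V, [u, a, b, c, d, e].Nodup ∧ H.Adj a b ∧ H.Adj b c ∧ H.Adj c d ∧ H.Adj d e

def HasTwoP3From : Prop :=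
  ∃ y x a b c : V, [u, y, x, a, b, c].Nodup ∧ H.Adj u y ∧ H.Adj y x ∧ H.Adj a b ∧ H.Adj b c

variable {H u}

theorem HasP5Avoiding.containsForest (h : HasP5Avoiding H u) :
    ContainsForest (attachPath H u 2) ![5, 3] := by
  obtain ⟨a, b, c, d, e, hnodup, hab, hbc, hcd, hde⟩ := h
  refine containsForest_pair _ [.inl a, .inl b, .inl c, .inl d, .inl e] [.inl u, .inr 0, .inr 1]
    ?_ ?_ ?_
  · simp only [List.cons_append, List.nil_append, List.nodup_cons, List.mem_cons, List.not_mem_nil,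
      Sum.inl.injEq, reduceCtorEq, or_false, not_or] at hnodup ⊢
    grind
  · simp [List.isChain_cons_cons, attachPath_adj_inl, *]
  · simp [List.isChain_cons_cons, attachPath_adj_inl_inr_zero, attachPath_adj_inr_succ]

theorem HasTwoP3From.containsForest (h : HasTwoP3From H u) :
    ContainsForest (attachPath H u 2) ![5, 3] := by
  obtain ⟨y, x, a, b, c, hnodup, huy, hyx, hab, hbc⟩ := h
  refine containsForest_pair _ [.inl x, .inl y, .inl u, .inr 0, .inr 1] [.inl a, .inl b, .inl c]
    ?_ ?_ ?_
  · simp only [List.cons_append, List.nil_append, List.nodup_cons, List.mem_cons, List.not_mem_nil,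
      Sum.inl.injEq, reduceCtorEq, or_false, not_or] at hnodup ⊢
    grind
  · simp [List.isChain_cons_cons, attachPath_adj_inl, attachPath_adj_inl_inr_zero,
      attachPath_adj_inr_succ, hyx.symm, huy.symm]
  · simp [List.isChain_cons_cons, attachPath_adj_inl, *]

end paths

namespace TwoConnected

variable {V : Type*} [Fintype V] {H : SimpleGraph V}

theorem exists_adj_boundary (hH : TwoConnected H) (c a b : V) (P : V → Prop)
    (hac : a ≠ c) (hbc : b ≠ c) (ha : ¬P a) (hb : P b) :
    ∃ x y, x ≠ c ∧ y ≠ c ∧ ¬P x ∧ P y ∧ H.Adj x y := by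
  classical
  obtain ⟨p⟩ := (hH.2 {c} (by simp)).preconnected ⟨a, by simpa using hac⟩ ⟨b, by simpa using hbc⟩
  obtain ⟨d, -, hx, hy⟩ := p.exists_boundary_dart {x | ¬P x} ha (by simpa using hb)
  refine ⟨d.fst, d.snd, ?_, ?_, hx, by simpa using hy, d.adj⟩
  · simpa using d.fst.2
  · simpa using d.snd.2

theorem exists_adj_ne (hH : TwoConnected H) {v c : V} (hvc : v ≠ c) :
    ∃ w, H.Adj v w ∧ w ≠ c := by
  obtain ⟨z, hz⟩ := [v, c].exists_notMem_of_length_lt_card hH.1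
  simp only [List.mem_cons, List.not_mem_nil, or_false, not_or] at hz
  obtain ⟨x, y, hxc, -, hx, rfl, hxy⟩ := hH.exists_adj_boundary c z v (· = v) hz.2 hvc hz.1 rfl
  exact ⟨x, hxy.symm, hxc⟩

end TwoConnected

theorem exists_equiv_fin_lt_two {V : Type*} [Fintype V] (hV : 2 ≤ Fintype.card V) (a b : V) :
    ∃ e : V ≃ Fin (Fintype.card V), (e a).val < 2 ∧ (e b).val < 2 := by
  let z₀ : Fin (Fintype.card V) := ⟨0, by omega⟩
  let z₁ : Fin (Fintype.card V) := ⟨1, hV⟩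
  let e₁ := (Fintype.equivFin V).trans (Equiv.swap (Fintype.equivFin V a) z₀)
  refine ⟨e₁.trans (Equiv.swap (e₁ b) z₁), ?_, by simp [z₁]⟩
  have he₁ : e₁ a = z₀ := by simp [e₁]
  simp only [Equiv.trans_apply, he₁, Equiv.swap_apply_def]
  split_ifs <;> simp_all [z₀, z₁, Fin.ext_iff]

theorem exists_adj_avoiding_of_not_subgraphOf {V : Type*} [Fintype V] {H : SimpleGraph V}
    (hV : 2 ≤ Fintype.card V) (hns : ¬ SubgraphOf H (Sgraph (Fintype.card V) 2)) (a b : V) :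
    ∃ x y, H.Adj x y ∧ x ≠ a ∧ x ≠ b ∧ y ≠ a ∧ y ≠ b := by
  by_contra! hcover
  obtain ⟨e, ha, hb⟩ := exists_equiv_fin_lt_two hV a b
  refine hns ⟨e.toEmbedding, fun x y hxy => ?_⟩
  simp only [Sgraph, fromRel_adj, ne_eq, Equiv.coe_toEmbedding, EmbeddingLike.apply_eq_iff_eq]
  refine ⟨hxy.ne, ?_⟩
  have hcov : x = a ∨ x = b ∨ y = a ∨ y = b := by
    by_contra! h
    exact h.2.2.2 (hcover x y hxy h.1 h.2.1 h.2.2.1)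
  rcases hcov with rfl | rfl | rfl | rfl
  exacts [.inl ha, .inl hb, .inr ha, .inr hb]

section pathsAvoiding

variable {V : Type*} {H : SimpleGraph V} {u : V}

theorem hasP5Avoiding_of_adj_end {z v₁ v₂ v₃ v₄ : V} (hP : [u, v₁, v₂, v₃, v₄].Nodup)
    (h₁₂ : H.Adj v₁ v₂) (h₂₃ : H.Adj v₂ v₃) (h₃₄ : H.Adj v₃ v₄) (hzu : z ≠ u)
    (hz : z ∉ [v₁, v₂, v₃, v₄]) (hzv : H.Adj z v₁ ∨ H.Adj z v₄) : HasP5Avoiding H u := by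
  rcases hzv with hzv | hzv
  exacts [⟨z, v₁, v₂, v₃, v₄, by grind [Adj.ne], hzv, h₁₂, h₂₃, h₃₄⟩,
    ⟨v₁, v₂, v₃, v₄, z, by grind [Adj.ne], h₁₂, h₂₃, h₃₄, hzv.symm⟩]

theorem exists_p4_avoiding_of_adj_center {p q r s t : V} (hP : [u, p, q, r].Nodup)
    (hpq : H.Adj p q) (hqr : H.Adj q r) (hpr : ¬H.Adj p r)
    (hsq : H.Adj s q) (hts : H.Adj t s) (hs : s ≠ u) (ht : t ≠ u) (htq : t ≠ q) :
    ∃ v₁ v₂ v₃ v₄, [u, v₁, v₂, v₃, v₄].Nodup ∧ H.Adj v₁ v₂ ∧ H.Adj v₂ v₃ ∧ H.Adj v₃ v₄ := by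
  by_cases hp : p = s ∨ p = t
  · exact ⟨t, s, q, r, by grind [Adj.ne, Adj.symm], hts, hsq, hqr⟩
  · exact ⟨t, s, q, p, by grind [Adj.ne], hts, hsq, hpq.symm⟩

variable [Fintype V]

theorem exists_p3_avoiding (hH : TwoConnected H) (hV : 4 ≤ Fintype.card V) {s t : V}
    (hst : H.Adj s t) (hs : s ≠ u) (ht : t ≠ u) :
    ∃ a b c, [u, a, b, c].Nodup ∧ H.Adj a b ∧ H.Adj b c := by
  obtain ⟨z, hz⟩ := [u, s, t].exists_notMem_of_length_lt_card (show 3 < _ by omega)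
  obtain ⟨x, y, hxu, -, hx, hy, hxy⟩ :=
    hH.exists_adj_boundary u z s (· ∈ [s, t]) (by grind) hs (by grind) (by simp)
  simp only [List.mem_cons, List.not_mem_nil, or_false, not_or] at hx hy
  rcases hy with rfl | rfl
  exacts [⟨x, y, t, by grind [Adj.ne], hxy, hst⟩, ⟨x, y, s, by grind [Adj.ne], hxy, hst.symm⟩]

theorem exists_p4_avoiding_of_triangle (hH : TwoConnected H) (hV : 5 ≤ Fintype.card V)
    {a b c : V} (hP : [u, a, b, c].Nodup) (hab : H.Adj a b) (hbc : H.Adj b c) (hca : H.Adj c a) :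
    ∃ v₁ v₂ v₃ v₄, [u, v₁, v₂, v₃, v₄].Nodup ∧ H.Adj v₁ v₂ ∧ H.Adj v₂ v₃ ∧ H.Adj v₃ v₄ := by
  obtain ⟨z, hz⟩ := [u, a, b, c].exists_notMem_of_length_lt_card (show 4 < _ by omega)
  obtain ⟨x, y, hxu, -, hx, hy, hxy⟩ :=
    hH.exists_adj_boundary u z a (· ∈ [a, b, c]) (by grind) (by grind) (by grind) (by simp)
  simp only [List.mem_cons, List.not_mem_nil, or_false, not_or] at hx hy
  rcases hy with rfl | rfl | rfl
  exacts [⟨x, y, b, c, by grind [Adj.ne], hxy, hab, hbc⟩,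
    ⟨x, y, c, a, by grind [Adj.ne], hxy, hbc, hca⟩, ⟨x, y, a, b, by grind [Adj.ne], hxy, hca, hab⟩]

theorem exists_p4_avoiding (hH : TwoConnected H) (hV : 5 ≤ Fintype.card V) {p q r s t : V}
    (hP : [u, p, q, r].Nodup) (hpq : H.Adj p q) (hqr : H.Adj q r)
    (hst : H.Adj s t) (hs : s ≠ u) (hsq : s ≠ q) (ht : t ≠ u) (htq : t ≠ q) :
    ∃ v₁ v₂ v₃ v₄, [u, v₁, v₂, v₃, v₄].Nodup ∧ H.Adj v₁ v₂ ∧ H.Adj v₂ v₃ ∧ H.Adj v₃ v₄ := by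
  by_cases hpr : H.Adj p r
  · exact exists_p4_avoiding_of_triangle hH hV hP hpq hqr hpr.symm
  by_cases hsq' : H.Adj s q
  · exact exists_p4_avoiding_of_adj_center hP hpq hqr hpr hsq' hst.symm hs ht htq
  by_cases htq' : H.Adj t q
  · exact exists_p4_avoiding_of_adj_center hP hpq hqr hpr htq' hst ht hs hsq
  obtain ⟨x, y, hxu, hyu, hx, hy, hxy⟩ :=
    hH.exists_adj_boundary u s q (fun w => w = q ∨ H.Adj w q) hs (by grind) (by tauto) (by simp)
  obtain rfl | hyq := hy
  · exact absurd (.inr hxy) hx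
  · exact exists_p4_avoiding_of_adj_center hP hpq hqr hpr hyq hxy hyu hxu (by tauto)

end pathsAvoiding

section noP5

variable {V : Type*} [Fintype V] {H : SimpleGraph V} {u v₁ v₂ v₃ v₄ z : V}

theorem adj_inner_of_not_hasP5Avoiding (hH : TwoConnected H) (hno : ¬HasP5Avoiding H u)
    (hP : [u, v₁, v₂, v₃, v₄].Nodup) (h₁₂ : H.Adj v₁ v₂) (h₂₃ : H.Adj v₂ v₃) (h₃₄ : H.Adj v₃ v₄)
    (hz : z ∉ [u, v₁, v₂, v₃, v₄]) : H.Adj z v₂ ∨ H.Adj z v₃ := by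
  by_contra! hzv
  obtain ⟨x, y, hxu, hyu, hx, hy, hxy⟩ := hH.exists_adj_boundary u z v₁
    (fun w => w ∈ [v₁, v₂, v₃, v₄] ∨ H.Adj w v₂ ∨ H.Adj w v₃) (by grind) (by grind)
    (by grind) (by simp)
  simp only [not_or] at hx
  obtain ⟨hxP, hx₂, hx₃⟩ := hx
  by_cases hyP : y ∈ [v₁, v₂, v₃, v₄]
  · simp only [List.mem_cons, List.not_mem_nil, or_false] at hyP
    rcases hyP with rfl | rfl | rfl | rfl
    · exact hno (hasP5Avoiding_of_adj_end hP h₁₂ h₂₃ h₃₄ hxu hxP (.inl hxy))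
    · exact hx₂ hxy
    · exact hx₃ hxy
    · exact hno (hasP5Avoiding_of_adj_end hP h₁₂ h₂₃ h₃₄ hxu hxP (.inr hxy))
  rcases hy.resolve_left hyP with hy | hy
  · exact hno ⟨x, y, v₂, v₃, v₄, by grind [Adj.ne], hxy, hy, h₂₃, h₃₄⟩
  · exact hno ⟨v₁, v₂, v₃, y, x, by grind [Adj.ne], h₁₂, h₂₃, hy.symm, hxy.symm⟩

theorem not_adj_ends_of_not_hasP5Avoiding (hH : TwoConnected H) (hno : ¬HasP5Avoiding H u)
    (hP : [u, v₁, v₂, v₃, v₄].Nodup) (h₁₂ : H.Adj v₁ v₂) (h₂₃ : H.Adj v₂ v₃) (h₃₄ : H.Adj v₃ v₄)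
    (hz : z ∉ [u, v₁, v₂, v₃, v₄]) : ¬H.Adj v₁ v₄ := fun h₁₄ =>
  (adj_inner_of_not_hasP5Avoiding hH hno hP h₁₂ h₂₃ h₃₄ hz).elim
    (fun hz₂ => hno ⟨z, v₂, v₁, v₄, v₃, by grind [Adj.ne], hz₂, h₁₂.symm, h₁₄, h₃₄.symm⟩)
    (fun hz₃ => hno ⟨z, v₃, v₄, v₁, v₂, by grind [Adj.ne], hz₃, h₃₄, h₁₄.symm, h₁₂⟩)

theorem hasTwoP3From_of_pendant (hH : TwoConnected H) (hno : ¬HasP5Avoiding H u)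
    (hP : [u, v₁, v₂, v₃, v₄].Nodup) (h₁₂ : H.Adj v₁ v₂) (h₂₃ : H.Adj v₂ v₃) (h₃₄ : H.Adj v₃ v₄)
    (hz : z ∉ [u, v₁, v₂, v₃, v₄]) (hz₂ : H.Adj z v₂) (h₂₄ : ¬H.Adj v₂ v₄) :
    HasTwoP3From H u := by
  have h₁₄ := not_adj_ends_of_not_hasP5Avoiding hH hno hP h₁₂ h₂₃ h₃₄ hz
  obtain ⟨w, h₄w, hw₃⟩ := hH.exists_adj_ne h₃₄.ne'
  obtain rfl : w = u := by
    by_contra hwu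
    refine hno (hasP5Avoiding_of_adj_end hP h₁₂ h₂₃ h₃₄ hwu ?_ (.inr h₄w.symm))
    simp only [List.mem_cons, List.not_mem_nil, or_false, not_or]
    refine ⟨?_, ?_, hw₃, h₄w.ne'⟩ <;> rintro rfl
    exacts [h₁₄ h₄w.symm, h₂₄ h₄w.symm]
  exact ⟨v₄, v₃, v₁, v₂, z, by grind [Adj.ne], h₄w.symm, h₃₄.symm, h₁₂, hz₂.symm⟩

theorem hasTwoP3From_of_triangle (hH : TwoConnected H) (hno : ¬HasP5Avoiding H u)
    (hP : [u, v₁, v₂, v₃, v₄].Nodup) (h₁₂ : H.Adj v₁ v₂) (h₂₃ : H.Adj v₂ v₃) (h₃₄ : H.Adj v₃ v₄)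
    (hz : z ∉ [u, v₁, v₂, v₃, v₄]) (h₁₃ : H.Adj v₁ v₃) : HasTwoP3From H u := by
  have h₁₄ := not_adj_ends_of_not_hasP5Avoiding hH hno hP h₁₂ h₂₃ h₃₄ hz
  have hz₃ : H.Adj z v₃ := (adj_inner_of_not_hasP5Avoiding hH hno hP h₁₂ h₂₃ h₃₄ hz).resolve_left
    fun hz₂ => hno ⟨z, v₂, v₁, v₃, v₄, by grind [Adj.ne], hz₂, h₁₂.symm, h₁₃, h₃₄⟩
  have h₂₄ : ¬H.Adj v₂ v₄ := fun h₂₄ =>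
    hno ⟨z, v₃, v₁, v₂, v₄, by grind [Adj.ne], hz₃, h₁₃.symm, h₁₂, h₂₄⟩
  obtain ⟨x, y, hx₃, -, hx, hy, hxy⟩ :=
    hH.exists_adj_boundary v₃ z v₁ (· ∈ [v₁, v₂]) (by grind) (by grind [Adj.ne]) (by grind)
      (by simp)
  simp only [List.mem_cons, List.not_mem_nil, or_false, not_or] at hx hy
  obtain rfl : x = u := by
    by_contra hxu
    have hx₄ : x ≠ v₄ := by
      rintro rfl
      rcases hy with rfl | rfl
      exacts [h₁₄ hxy.symm, h₂₄ hxy.symm]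
    rcases hy with rfl | rfl
    · exact hno (hasP5Avoiding_of_adj_end hP h₁₂ h₂₃ h₃₄ hxu (by simp [hx, hx₃, hx₄]) (.inl hxy))
    · refine hno ⟨x, y, v₁, v₃, v₄, ?_, hxy, h₁₂.symm, h₁₃, h₃₄⟩
      simp only [List.nodup_cons, List.mem_cons, List.not_mem_nil, or_false, not_or] at hP ⊢
      grind [Adj.ne]
  rcases hy with rfl | rfl
  · exact ⟨y, v₂, v₄, v₃, z, by grind [Adj.ne], hxy, h₁₂, h₃₄.symm, hz₃.symm⟩
  · exact ⟨y, v₁, v₄, v₃, z, by grind [Adj.ne], hxy, h₁₂.symm, h₃₄.symm, hz₃.symm⟩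

end noP5

theorem hasP5Avoiding_or_hasTwoP3From {V : Type*} [Fintype V] {H : SimpleGraph V} {u : V}
    (hH : TwoConnected H) (hV : 6 ≤ Fintype.card V)
    (hcov : ∀ q, ∃ s t, H.Adj s t ∧ s ≠ u ∧ s ≠ q ∧ t ≠ u ∧ t ≠ q) :
    HasP5Avoiding H u ∨ HasTwoP3From H u := by
  refine or_iff_not_imp_left.mpr fun hno => ?_
  obtain ⟨s, t, hst, hs, -, ht, -⟩ := hcov u
  obtain ⟨p, q, r, hP₃, hpq, hqr⟩ := exists_p3_avoiding hH (by omega) hst hs ht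
  obtain ⟨s', t', hst', hs', hsq, ht', htq⟩ := hcov q
  obtain ⟨v₁, v₂, v₃, v₄, hP, h₁₂, h₂₃, h₃₄⟩ :=
    exists_p4_avoiding hH (by omega) hP₃ hpq hqr hst' hs' hsq ht' htq
  obtain ⟨z, hz⟩ := [u, v₁, v₂, v₃, v₄].exists_notMem_of_length_lt_card (show 5 < _ by omega)
  have hP' : [u, v₄, v₃, v₂, v₁].Nodup := by grind
  have hz' : z ∉ [u, v₄, v₃, v₂, v₁] := by
    simp only [List.mem_cons, List.not_mem_nil, or_false, not_or] at hz ⊢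
    tauto
  by_cases h₁₃ : H.Adj v₁ v₃
  · exact hasTwoP3From_of_triangle hH hno hP h₁₂ h₂₃ h₃₄ hz h₁₃
  by_cases h₂₄ : H.Adj v₂ v₄
  · exact hasTwoP3From_of_triangle hH hno hP' h₃₄.symm h₂₃.symm h₁₂.symm hz' h₂₄.symm
  rcases adj_inner_of_not_hasP5Avoiding hH hno hP h₁₂ h₂₃ h₃₄ hz with hz₂ | hz₃
  · exact hasTwoP3From_of_pendant hH hno hP h₁₂ h₂₃ h₃₄ hz hz₂ h₂₄
  · exact hasTwoP3From_of_pendant hH hno hP' h₃₄.symm h₂₃.symm h₁₂.symm hz' hz₃ (h₁₃ ∘ .symm)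

theorem stmt_12_general {V : Type*} [Fintype V] (H : SimpleGraph V)
    (hH : TwoConnected H) (hcard : 6 ≤ Fintype.card V)
    (hns : ¬ SubgraphOf H (Sgraph (Fintype.card V) 2)) (u₁ : V) :
    ContainsForest (attachPath H u₁ 2) ![5, 3] := by
  rcases hasP5Avoiding_or_hasTwoP3From hH hcard
    (exists_adj_avoiding_of_not_subgraphOf (by omega) hns u₁) with h | h
  exacts [h.containsForest, h.containsForest]

theorem stmt_12 {V : Type*} [Fintype V] [DecidableEq V] (H : SimpleGraph V)
    [DecidableRel H.Adj] (hH : TwoConnected H) (hcard : 6 ≤ Fintype.card V)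
    (hns : ¬ SubgraphOf H (Sgraph (Fintype.card V) 2)) (u₁ : V) :
    ContainsForest (attachPath H u₁ 2) ![5, 3] :=
  stmt_12_general H hH hcard hns u₁
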